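/- Let d ≥ 1 be an integer, b > 0, q ≥ 1, and let Z₁, …, Z_d be independent real random variables, each with the generalized Gaussian distribution of scale b and shape q, whose common variance is σ² = b²·Γ(3/q)/Γ(1/q). Let S = Z₁ + ⋯ + Z_d. Then for every real τ > 0 with τ²·d ≥ 16 and every real s, P(S ≥ s) ≤ exp(−s/(τσ√d)) · exp(4/τ²). -/

import Mathlib

open MeasureTheory Real

/-- The generalized Gaussian distribution with scale `b` and shape `q`:
density `z ↦ (q/(2bΓ(1/q))) · exp(−(|z|/b)^q)` w.r.t. Lebesgue measure. -/
noncomputable def genGaussian (b q : ℝ) : Measure ℝ :=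
  volume.withDensity
    (fun z => ENNReal.ofReal ((q / (2 * b * Real.Gamma (1 / q))) * Real.exp (-((|z| / b) ^ q))))

/-!
Chernoff's method reduces the claim to the bound `E e^{tZ} ≤ exp(4 t²σ²)` for `t²σ² ≤ 3/4`,
at `t = 1/(τσ√d)`. As `Z` is symmetric, `E e^{tZ} = E cosh(tZ) = ∑ t^{2n} E Z^{2n} / (2n)!`, and
`E Z^{2n} = b^{2n} Γ((2n+1)/q) / Γ(1/q)`. For `u = 1/q ∈ (0, 1]`, log-convexity of `Γ` gives
`Γ(x + 2u) ≤ (x(x+1))^u Γ(x)`; together with `8^{u-1} Γ(u) ≤ Γ(3u)` this yields by induction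
`E Z^{2n} ≤ (2n)! σ^{2n}`, so that `E e^{tZ} ≤ ∑ (t²σ²)^n = (1 - t²σ²)⁻¹ ≤ exp(4t²σ²)`.
-/

open Set
open scoped ENNReal Nat

namespace Real

theorem Gamma_le_one_of_mem_Icc {x : ℝ} (hx : x ∈ Icc 1 2) : Gamma x ≤ 1 := by
  have := convexOn_Gamma.le_on_segment (mem_Ioi.2 one_pos) (mem_Ioi.2 two_pos)
    (by rwa [segment_eq_Icc one_le_two])
  simpa [Gamma_two] using this

theorem pi_div_four_le_Gamma {x : ℝ} (hx : x ∈ Icc 1 2) : π / 4 ≤ Gamma x := by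
  have hΓx : 0 < Gamma x := Gamma_pos_of_pos (by linarith [hx.1])
  have hΓ : Gamma (3 / 2) = √π / 2 := by
    rw [show (3 / 2 : ℝ) = 1 / 2 + 1 by norm_num, Gamma_add_one (by norm_num), Gamma_one_half_eq]
    ring
  have hmid := Gamma_mul_add_mul_le_rpow_Gamma_mul_rpow_Gamma (s := x) (t := 3 - x)
    (by linarith [hx.1]) (by linarith [hx.2]) one_half_pos one_half_pos (by norm_num)
  rw [show 1 / 2 * x + 1 / 2 * (3 - x) = 3 / 2 by ring, hΓ, ← sqrt_eq_rpow, ← sqrt_eq_rpow,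
    ← sqrt_mul hΓx.le] at hmid
  calc π / 4 = (√π / 2) ^ 2 := by rw [div_pow, sq_sqrt pi_pos.le]; norm_num
    _ ≤ Gamma x * Gamma (3 - x) := (le_sqrt (by positivity)
      (mul_pos hΓx (Gamma_pos_of_pos (by linarith [hx.2]))).le).1 hmid
    _ ≤ Gamma x := mul_le_of_le_one_right hΓx.le
      (Gamma_le_one_of_mem_Icc ⟨by linarith [hx.2], by linarith [hx.1]⟩)

theorem two_rpow_le_one_add {w : ℝ} (hw : w ∈ Icc (0 : ℝ) 1) : (2 : ℝ) ^ w ≤ 1 + w := by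
  simpa [one_add_one_eq_two] using
    rpow_one_add_le_one_add_mul_self (s := 1) (by norm_num) hw.1 hw.2

theorem three_mul_two_rpow_le_Gamma {y : ℝ} (hy : y ∈ Icc 1 4) : 3 * 2 ^ (y - 4) ≤ Gamma y := by
  -- on each of `[1, 2]`, `[2, 3]`, `[3, 4]`: `2 ^ (y - 4)` lies below its chord, and the
  -- functional equation reduces `Γ y` to `Γ` on `[1, 2]`, where it is at least `π / 4`
  obtain ⟨hy1, hy4⟩ := hy
  have hπ := pi_gt_three
  rcases le_total y 2 with hy2 | hy2
  · have h2 : (2 : ℝ) ^ (y - 4) ≤ 1 / 4 :=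
      (rpow_le_rpow_of_exponent_le one_le_two (by linarith : y - 4 ≤ -2)).trans_eq (by norm_num)
    linarith [pi_div_four_le_Gamma ⟨hy1, hy2⟩]
  rcases le_total y 3 with hy3 | hy3
  · have hrec : Gamma y = (y - 1) * Gamma (y - 1) := by
      rw [← Gamma_add_one (by linarith), sub_add_cancel]
    have h2 : (2 : ℝ) ^ (y - 4) = 2 ^ (y - 2) / 4 := by
      rw [show y - 4 = y - 2 - 2 by ring, rpow_sub two_pos]; norm_num
    have hchord := two_rpow_le_one_add (w := y - 2) ⟨by linarith, by linarith⟩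
    have hΓ := pi_div_four_le_Gamma (x := y - 1) ⟨by linarith, by linarith⟩
    rw [hrec, h2]
    nlinarith
  · have hrec : Gamma y = (y - 1) * ((y - 2) * Gamma (y - 2)) := by
      rw [← Gamma_add_one (s := y - 2) (by linarith), show y - 2 + 1 = y - 1 by ring,
        ← Gamma_add_one (by linarith), sub_add_cancel]
    have h2 : (2 : ℝ) ^ (y - 4) = 2 ^ (y - 3) / 2 := by
      rw [show y - 4 = y - 3 - 1 by ring, rpow_sub two_pos, rpow_one]
    have hchord := two_rpow_le_one_add (w := y - 3) ⟨by linarith, by linarith⟩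
    have hΓ := pi_div_four_le_Gamma (x := y - 2) ⟨by linarith, by linarith⟩
    have hprod : 0 ≤ (y - 1) * (y - 2) := by nlinarith
    rw [hrec, h2]
    nlinarith [mul_le_mul_of_nonneg_left hΓ hprod]

/-- The base `8` is what the induction in `Gamma_two_mul_add_one_mul_div_Gamma_le` can afford
(it needs a base `≤ (2n + 3)(2n + 4)`), and `8 = 2³` turns the left side into `2 ^ (3u - 3)`. -/
theorem eight_rpow_sub_one_le_Gamma_three_mul_div_Gamma {u : ℝ} (hu : u ∈ Ioc 0 1) :
    (8 : ℝ) ^ (u - 1) ≤ Gamma (3 * u) / Gamma u := by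
  obtain ⟨hu0, hu1⟩ := hu
  have hsmall : u * Gamma u ≤ 1 := by
    rw [← Gamma_add_one hu0.ne']
    exact Gamma_le_one_of_mem_Icc ⟨by linarith, by linarith⟩
  have hbig : 3 * (8 : ℝ) ^ (u - 1) ≤ 3 * u * Gamma (3 * u) := by
    rw [← Gamma_add_one (by positivity), show (8 : ℝ) = 2 ^ (3 : ℕ) by norm_num,
      ← rpow_natCast_mul two_pos.le]
    convert three_mul_two_rpow_le_Gamma (y := 3 * u + 1) ⟨by linarith, by linarith⟩ using 3
    push_cast; ring
  rw [le_div_iff₀ (Gamma_pos_of_pos hu0)]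
  nlinarith [Gamma_pos_of_pos (by positivity : 0 < 3 * u),
    rpow_pos_of_pos (by norm_num : (0 : ℝ) < 8) (u - 1)]

theorem Gamma_add_two_mul_le {x u : ℝ} (hx : 0 < x) (hu : u ∈ Icc (0 : ℝ) 1) :
    Gamma (x + 2 * u) ≤ (x * (x + 1)) ^ u * Gamma x := by
  have hΓx := Gamma_pos_of_pos hx
  have hconv : Gamma ((1 - u) * x + u * (x + 2)) ≤ Gamma x ^ (1 - u) * Gamma (x + 2) ^ u := by
    rcases hu.1.eq_or_lt with rfl | hu0
    · simp
    rcases hu.2.eq_or_lt with rfl | hu1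
    · simp
    exact Gamma_mul_add_mul_le_rpow_Gamma_mul_rpow_Gamma hx (by linarith) (by linarith) hu0
      (by ring)
  have hx2 : Gamma (x + 2) = x * (x + 1) * Gamma x := by
    rw [show x + 2 = x + 1 + 1 by ring, Gamma_add_one (by linarith), Gamma_add_one hx.ne']
    ring
  rwa [show (1 - u) * x + u * (x + 2) = x + 2 * u by ring, hx2,
    mul_rpow (by positivity) hΓx.le, mul_left_comm, ← rpow_add hΓx, sub_add_cancel,
    rpow_one] at hconv

theorem Gamma_two_mul_add_one_mul_div_Gamma_le {u : ℝ} (hu : u ∈ Ioc 0 1) (n : ℕ) :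
    Gamma ((2 * n + 1) * u) / Gamma u ≤ (2 * n)! * (Gamma (3 * u) / Gamma u) ^ n := by
  obtain ⟨hu0, hu1⟩ := hu
  have hΓu : 0 < Gamma u := Gamma_pos_of_pos hu0
  set r := Gamma (3 * u) / Gamma u
  have hr : 0 < r := div_pos (Gamma_pos_of_pos (by positivity)) hΓu
  rcases n with _ | n
  · simp [hΓu.ne']
  induction n with
  | zero => norm_num; linarith
  | succ n ih =>
    set x : ℝ := (2 * (n + 1 : ℕ) + 1) * u
    have hx : 0 < x := by positivity
    set M : ℝ := (2 * n + 3) * (2 * n + 4) with hM_def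
    have hM : 8 ≤ M := by rw [hM_def]; nlinarith
    have hxM : x * (x + 1) ≤ M := by
      have : x ≤ 2 * n + 3 := by simp only [x]; push_cast; nlinarith
      rw [hM_def]; nlinarith
    calc Gamma ((2 * (n + 1 + 1 : ℕ) + 1) * u) / Gamma u
        = Gamma (x + 2 * u) / Gamma u := by congr 2; simp only [x]; push_cast; ring
      _ ≤ (x * (x + 1)) ^ u * Gamma x / Gamma u := by
        gcongr; exact Gamma_add_two_mul_le hx ⟨hu0.le, hu1⟩
      _ ≤ M ^ u * (Gamma x / Gamma u) := by
        rw [mul_div_assoc]; gcongr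
      _ = M * M ^ (u - 1) * (Gamma x / Gamma u) := by
        rw [← rpow_one_add' (by positivity) (by rw [add_sub_cancel]; exact hu0.ne'),
          add_sub_cancel]
      _ ≤ M * 8 ^ (u - 1) * (Gamma x / Gamma u) := by
        have := rpow_le_rpow_of_nonpos (by norm_num : (0 : ℝ) < 8) hM (sub_nonpos.2 hu1)
        have := div_nonneg (Gamma_pos_of_pos hx).le hΓu.le
        gcongr
      _ ≤ M * r * ((2 * (n + 1))! * r ^ (n + 1)) := by
        gcongr
        exact eight_rpow_sub_one_le_Gamma_three_mul_div_Gamma ⟨hu0, hu1⟩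
      _ = (2 * (n + 1 + 1))! * r ^ (n + 1 + 1) := by
        rw [show 2 * (n + 1 + 1) = 2 * (n + 1) + 1 + 1 by ring, Nat.factorial_succ,
          Nat.factorial_succ]
        push_cast; ring

end Real

theorem ENNReal.inv_one_sub_ofReal_le_ofReal_exp {x : ℝ} (hx0 : 0 ≤ x) (hx : x ≤ 3 / 4) :
    (1 - ENNReal.ofReal x)⁻¹ ≤ ENNReal.ofReal (exp (4 * x)) := by
  have hexp : exp (-(4 * x)) ≤ 1 - x := by
    rw [exp_neg, inv_le_iff_one_le_mul₀ (exp_pos _)]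
    nlinarith [add_one_le_exp (4 * x)]
  rw [← ENNReal.ofReal_one, ← ENNReal.ofReal_sub _ hx0, ← inv_inv (ENNReal.ofReal (exp _)),
    ← ENNReal.ofReal_inv_of_pos (exp_pos _), ← exp_neg]
  exact ENNReal.inv_le_inv.2 (ENNReal.ofReal_le_ofReal hexp)

theorem isNegInvariant_withDensity {G : Type*} [MeasurableSpace G] [InvolutiveNeg G]
    [MeasurableNeg G] {μ : Measure G} [μ.IsNegInvariant] {f : G → ℝ≥0∞}
    (hf : ∀ x, f (-x) = f x) : (μ.withDensity f).IsNegInvariant := by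
  refine ⟨Measure.ext fun s hs => ?_⟩
  rw [Measure.neg_def, Measure.map_apply measurable_neg hs,
    withDensity_apply _ (measurable_neg hs), withDensity_apply _ hs,
    ← lintegral_indicator (measurable_neg hs), ← lintegral_indicator hs, ← lintegral_neg_eq_self]
  congr with x
  by_cases hx : x ∈ s <;> simp [indicator, hx, hf]

section Symmetric

variable (μ : Measure ℝ) [μ.IsNegInvariant]

theorem lintegral_ofReal_exp_mul_eq_lintegral_ofReal_cosh_mul (t : ℝ) :
    ∫⁻ z, ENNReal.ofReal (exp (t * z)) ∂μ = ∫⁻ z, ENNReal.ofReal (cosh (t * z)) ∂μ := by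
  have hcosh (z : ℝ) : ENNReal.ofReal (cosh (t * z)) =
      (ENNReal.ofReal (exp (t * z)) + ENNReal.ofReal (exp (t * -z))) * 2⁻¹ := by
    rw [cosh_eq, div_eq_mul_inv, ENNReal.ofReal_mul (by positivity),
      ENNReal.ofReal_add (by positivity) (by positivity), ENNReal.ofReal_inv_of_pos two_pos,
      mul_neg]
    norm_num
  simp_rw [hcosh]
  rw [lintegral_mul_const _ (by fun_prop), lintegral_add_left (by fun_prop),
    lintegral_neg_eq_self (fun z => ENNReal.ofReal (exp (t * z))), ← two_mul, mul_comm,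
    ← mul_assoc, ENNReal.inv_mul_cancel two_ne_zero ENNReal.ofNat_ne_top, one_mul]

theorem lintegral_ofReal_exp_mul_eq_tsum (t : ℝ) :
    ∫⁻ z, ENNReal.ofReal (exp (t * z)) ∂μ =
      ∑' n, ENNReal.ofReal (t ^ (2 * n) / (2 * n)!) * ∫⁻ z, ENNReal.ofReal (z ^ (2 * n)) ∂μ := by
  have hterm (y : ℝ) (n : ℕ) : 0 ≤ y ^ (2 * n) / (2 * n)! :=
    div_nonneg ((even_two_mul n).pow_nonneg y) (Nat.cast_nonneg _)
  have hseries (z : ℝ) : ENNReal.ofReal (cosh (t * z)) =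
      ∑' n, ENNReal.ofReal (t ^ (2 * n) / (2 * n)!) * ENNReal.ofReal (z ^ (2 * n)) := by
    rw [cosh_eq_tsum, ENNReal.ofReal_tsum_of_nonneg (hterm _) (hasSum_cosh _).summable]
    congr with n
    rw [← ENNReal.ofReal_mul (hterm _ _), mul_pow]
    ring_nf
  rw [lintegral_ofReal_exp_mul_eq_lintegral_ofReal_cosh_mul, lintegral_congr hseries,
    lintegral_tsum fun n => by fun_prop]
  congr with n
  exact lintegral_const_mul _ (by fun_prop)

theorem lintegral_ofReal_exp_mul_le_of_moment_le {v : ℝ} (hv : 0 ≤ v)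
    (hmom : ∀ n, ∫⁻ z, ENNReal.ofReal (z ^ (2 * n)) ∂μ ≤ ENNReal.ofReal ((2 * n)! * v ^ n))
    (t : ℝ) : ∫⁻ z, ENNReal.ofReal (exp (t * z)) ∂μ ≤ (1 - ENNReal.ofReal (t ^ 2 * v))⁻¹ := by
  rw [lintegral_ofReal_exp_mul_eq_tsum, ← ENNReal.tsum_geometric]
  refine ENNReal.tsum_le_tsum fun n => ?_
  calc ENNReal.ofReal (t ^ (2 * n) / (2 * n)!) * ∫⁻ z, ENNReal.ofReal (z ^ (2 * n)) ∂μ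
      ≤ ENNReal.ofReal (t ^ (2 * n) / (2 * n)!) * ENNReal.ofReal ((2 * n)! * v ^ n) := by
        gcongr; exact hmom n
    _ = ENNReal.ofReal (t ^ 2 * v) ^ n := by
        rw [← ENNReal.ofReal_mul (div_nonneg ((even_two_mul n).pow_nonneg t) (Nat.cast_nonneg _)),
          ← ENNReal.ofReal_pow (by positivity)]
        congr 1
        field_simp
        ring

end Symmetric

open ProbabilityTheory in
theorem measure_pi_sum_ge_le {ι : Type*} [Fintype ι] (μ : Measure ℝ) [IsProbabilityMeasure μ]
    {t : ℝ} (ht : 0 ≤ t) (s : ℝ) :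
    Measure.pi (fun _ : ι => μ) {w | s ≤ ∑ i, w i} ≤
      ENNReal.ofReal (exp (-(t * s))) *
        (∫⁻ z, ENNReal.ofReal (exp (t * z)) ∂μ) ^ Fintype.card ι := by
  set P := Measure.pi fun _ : ι => μ
  have hmgf : ∫⁻ w, ENNReal.ofReal (exp (t * ∑ i, w i)) ∂P =
      (∫⁻ z, ENNReal.ofReal (exp (t * z)) ∂μ) ^ Fintype.card ι := by
    simp_rw [Finset.mul_sum, exp_sum, ENNReal.ofReal_prod_of_nonneg fun i _ => (exp_pos _).le]
    rw [lintegral_prod_eq_prod_lintegral_of_indepFun _ _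
      (iIndepFun_pi (X := fun _ z => ENNReal.ofReal (exp (t * z))) fun _ => by fun_prop)
      fun i => by fun_prop]
    simp_rw [fun i => (measurePreserving_eval (fun _ : ι => μ) i).lintegral_comp
      (f := fun z => ENNReal.ofReal (exp (t * z))) (by fun_prop)]
    rw [Finset.prod_const, Finset.card_univ]
  have hmarkov : ENNReal.ofReal (exp (t * s)) * P {w | s ≤ ∑ i, w i} ≤
      ∫⁻ w, ENNReal.ofReal (exp (t * ∑ i, w i)) ∂P := by
    refine le_trans ?_ (mul_meas_ge_le_lintegral₀ (by fun_prop) (ENNReal.ofReal (exp (t * s))))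
    gcongr _ * P ?_
    intro w hw
    exact ENNReal.ofReal_le_ofReal (exp_le_exp.2 (mul_le_mul_of_nonneg_left hw ht))
  calc P {w | s ≤ ∑ i, w i}
      = ENNReal.ofReal (exp (-(t * s))) *
          (ENNReal.ofReal (exp (t * s)) * P {w | s ≤ ∑ i, w i}) := by
        rw [← mul_assoc, ← ENNReal.ofReal_mul (exp_pos _).le, ← exp_add, neg_add_cancel, exp_zero,
          ENNReal.ofReal_one, one_mul]
    _ ≤ _ := by rw [← hmgf]; gcongr

theorem lintegral_comp_abs {f : ℝ → ℝ≥0∞} (hf : Measurable f) :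
    ∫⁻ x, f |x| = 2 * ∫⁻ x in Ioi 0, f x := by
  have hsplit (x : ℝ) : f |x| = (Ici 0).indicator f x + (Ioi 0).indicator f (-x) := by
    rcases le_or_gt 0 x with hx | hx
    · simp [hx, abs_of_nonneg hx, not_lt.2 (neg_nonpos.2 hx)]
    · simp [hx, hx.not_ge, abs_of_neg hx]
  simp_rw [hsplit]
  rw [lintegral_add_left (hf.indicator measurableSet_Ici),
    lintegral_neg_eq_self ((Ioi 0).indicator f), lintegral_indicator measurableSet_Ici,
    lintegral_indicator measurableSet_Ioi, setLIntegral_congr Ioi_ae_eq_Ici.symm, two_mul]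

instance (b q : ℝ) : (genGaussian b q).IsNegInvariant :=
  isNegInvariant_withDensity fun z => by rw [abs_neg]

theorem lintegral_abs_rpow_genGaussian {b q p : ℝ} (hb : 0 < b) (hq : 0 < q) (hp : -1 < p) :
    ∫⁻ z, ENNReal.ofReal (|z| ^ p) ∂genGaussian b q =
      ENNReal.ofReal (b ^ p * Gamma ((p + 1) / q) / Gamma (1 / q)) := by
  rw [genGaussian, lintegral_withDensity_eq_lintegral_mul _ (by fun_prop) (by fun_prop)]
  simp only [Pi.mul_apply]
  have hΓ := Gamma_pos_of_pos (one_div_pos.2 hq)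
  set c := q / (2 * b * Gamma (1 / q)) with hc_def
  have hIoi : EqOn (fun y => c * (y ^ p * exp (-b ^ (-q) * y ^ q)))
      (fun y => c * exp (-(y / b) ^ q) * y ^ p) (Ioi 0) := by
    intro y hy
    simp only [div_rpow (le_of_lt hy) hb.le, rpow_neg hb.le]
    ring_nf
  have hint : IntegrableOn (fun y => c * exp (-(y / b) ^ q) * y ^ p) (Ioi 0) :=
    IntegrableOn.congr_fun
      ((integrableOn_rpow_mul_exp_neg_mul_rpow hp hq (rpow_pos_of_pos hb (-q))).const_mul c)
      hIoi measurableSet_Ioi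
  have hnonneg : ∀ᵐ y ∂volume.restrict (Ioi 0), 0 ≤ c * exp (-(y / b) ^ q) * y ^ p :=
    ae_restrict_of_forall_mem measurableSet_Ioi fun y hy =>
      mul_nonneg (by positivity) (rpow_nonneg (le_of_lt hy) p)
  rw [lintegral_congr fun z => (ENNReal.ofReal_mul (by positivity)).symm,
    lintegral_comp_abs (f := fun y => ENNReal.ofReal (c * exp (-(y / b) ^ q) * y ^ p))
      (by fun_prop),
    ← ofReal_integral_eq_lintegral_ofReal hint hnonneg,
    ← setIntegral_congr_fun measurableSet_Ioi hIoi, integral_const_mul,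
    integral_rpow_mul_exp_neg_mul_rpow hq hp (rpow_pos_of_pos hb (-q)), ← rpow_mul hb.le,
    ← ENNReal.ofReal_ofNat 2, ← ENNReal.ofReal_mul zero_le_two]
  congr 1
  rw [show -q * (-(p + 1) / q) = p + 1 by field_simp, rpow_add_one hb.ne', hc_def]
  field_simp

theorem isProbabilityMeasure_genGaussian {b q : ℝ} (hb : 0 < b) (hq : 0 < q) :
    IsProbabilityMeasure (genGaussian b q) := by
  have hmass := lintegral_abs_rpow_genGaussian hb hq (p := 0) (by norm_num)
  simp only [rpow_zero, ENNReal.ofReal_one, lintegral_one, zero_add, one_mul,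
    div_self (Gamma_pos_of_pos (one_div_pos.2 hq)).ne'] at hmass
  exact ⟨hmass⟩

theorem lintegral_pow_genGaussian_le {b q σ : ℝ} (hb : 0 < b) (hq : 1 ≤ q)
    (hσ : σ ^ 2 = b ^ 2 * Gamma (3 / q) / Gamma (1 / q)) (n : ℕ) :
    ∫⁻ z, ENNReal.ofReal (z ^ (2 * n)) ∂genGaussian b q ≤
      ENNReal.ofReal ((2 * n)! * (σ ^ 2) ^ n) := by
  have hq0 : 0 < q := by linarith
  have hmom := lintegral_abs_rpow_genGaussian hb hq0 (p := (2 * n : ℕ))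
    (neg_one_lt_zero.trans_le (Nat.cast_nonneg _))
  simp_rw [rpow_natCast, (even_two_mul n).pow_abs] at hmom
  rw [hmom, hσ, mul_div_assoc, mul_div_assoc, mul_pow, ← pow_mul]
  refine ENNReal.ofReal_le_ofReal ?_
  calc b ^ (2 * n) * (Gamma ((((2 * n : ℕ) : ℝ) + 1) / q) / Gamma (1 / q))
      = b ^ (2 * n) * (Gamma ((2 * n + 1) * (1 / q)) / Gamma (1 / q)) := by push_cast; ring_nf
    _ ≤ b ^ (2 * n) * ((2 * n)! * (Gamma (3 * (1 / q)) / Gamma (1 / q)) ^ n) := by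
        gcongr
        exact Gamma_two_mul_add_one_mul_div_Gamma_le ⟨one_div_pos.2 hq0, (div_le_one hq0).2 hq⟩ n
    _ = (2 * n)! * (b ^ (2 * n) * (Gamma (3 / q) / Gamma (1 / q)) ^ n) := by ring_nf

theorem lintegral_exp_mul_genGaussian_le {b q σ : ℝ} (hb : 0 < b) (hq : 1 ≤ q)
    (hσ : σ ^ 2 = b ^ 2 * Gamma (3 / q) / Gamma (1 / q)) {t : ℝ} (ht : t ^ 2 * σ ^ 2 ≤ 3 / 4) :
    ∫⁻ z, ENNReal.ofReal (exp (t * z)) ∂genGaussian b q ≤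
      ENNReal.ofReal (exp (4 * (t ^ 2 * σ ^ 2))) :=
  (lintegral_ofReal_exp_mul_le_of_moment_le _ (sq_nonneg σ)
    (lintegral_pow_genGaussian_le hb hq hσ) t).trans
    (ENNReal.inv_one_sub_ofReal_le_ofReal_exp (by positivity) ht)

theorem genGaussian_sum_chernoff_bound_general
    (d : ℕ) (b q : ℝ) (hb : 0 < b) (hq : 1 ≤ q)
    (σ : ℝ) (hσ0 : 0 ≤ σ) (hσ : σ ^ 2 = b ^ 2 * Real.Gamma (3 / q) / Real.Gamma (1 / q))
    (τ : ℝ) (hτ : 0 < τ) (hτd : 16 ≤ τ ^ 2 * (d : ℝ)) (s : ℝ) :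
    Measure.pi (fun _ : Fin d => genGaussian b q) {w | s ≤ ∑ i, w i} ≤
      ENNReal.ofReal
        (Real.exp (-(s / (τ * σ * Real.sqrt d))) * Real.exp (4 / τ ^ 2)) := by
  have : IsProbabilityMeasure (genGaussian b q) := isProbabilityMeasure_genGaussian hb (by linarith)
  have hd : (0 : ℝ) < d := by nlinarith [sq_nonneg τ, (Nat.cast_nonneg d : (0 : ℝ) ≤ d)]
  have hσpos : 0 < σ := by
    have := Gamma_pos_of_pos (by positivity : 0 < 3 / q)
    have := Gamma_pos_of_pos (by positivity : 0 < 1 / q)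
    have hσ2 : 0 < σ ^ 2 := by rw [hσ]; positivity
    exact lt_of_pow_lt_pow_left₀ 2 hσ0 (by rwa [zero_pow two_ne_zero])
  set t := (τ * σ * √d)⁻¹
  have htσ : t ^ 2 * σ ^ 2 = (τ ^ 2 * d)⁻¹ := by
    simp only [t]
    field_simp
    rw [sq_sqrt hd.le]
  have hmgf := lintegral_exp_mul_genGaussian_le hb hq hσ (t := t)
    (by rw [htσ]; exact inv_le_of_inv_le₀ (by norm_num) (by norm_num; linarith))
  calc _ ≤ ENNReal.ofReal (exp (-(t * s))) *
        (∫⁻ z, ENNReal.ofReal (exp (t * z)) ∂genGaussian b q) ^ Fintype.card (Fin d) :=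
        measure_pi_sum_ge_le _ (by positivity) s
    _ ≤ ENNReal.ofReal (exp (-(t * s))) * ENNReal.ofReal (exp (4 * (t ^ 2 * σ ^ 2))) ^ d := by
        rw [Fintype.card_fin]; gcongr
    _ = _ := by
        rw [← ENNReal.ofReal_pow (exp_pos _).le, ← exp_nat_mul,
          ← ENNReal.ofReal_mul (exp_pos _).le, htσ]
        congr 3
        · simp only [t]; ring
        · field_simp

/-- **Intermediate Chernoff bound (proof of Theorem 2).** If `S` is the sum of `d` i.i.d.
generalized Gaussian variables (joint law: the `d`-fold product measure) with common
variance `σ²`, then for `τ > 0` with `τ²d ≥ 16` and any `s`,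
`P(S ≥ s) ≤ exp(−s/(τσ√d))·exp(4/τ²)`. -/
theorem genGaussian_sum_chernoff_bound
    (d : ℕ) (hd : 1 ≤ d) (b q : ℝ) (hb : 0 < b) (hq : 1 ≤ q)
    (σ : ℝ) (hσ0 : 0 ≤ σ) (hσ : σ ^ 2 = b ^ 2 * Real.Gamma (3 / q) / Real.Gamma (1 / q))
    (τ : ℝ) (hτ : 0 < τ) (hτd : 16 ≤ τ ^ 2 * (d : ℝ)) (s : ℝ) :
    Measure.pi (fun _ : Fin d => genGaussian b q) {w | s ≤ ∑ i, w i} ≤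
      ENNReal.ofReal
        (Real.exp (-(s / (τ * σ * Real.sqrt d))) * Real.exp (4 / τ ^ 2)) :=
  genGaussian_sum_chernoff_bound_general d b q hb hq σ hσ0 hσ τ hτ hτd s
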